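/- arXiv:0808.1274 — 3 statements merged into one kernel-verified Lean document; each statement's English description precedes it below -/
import Mathlib

section
/- There exists a smooth function F: ℝ² → ℝ such that the graph Γ = {(x₁, x₂, ∂F/∂x₁(x₁,x₂), ∂F/∂x₂(x₁,x₂))} ⊂ ℝ⁴ of dF satisfies Γ ∩ {y₂ = 1} = i₁(8¹₋(5)) and Γ ∩ {y₂ = 10} = i₁₀(8¹₋(4)). (Consequently there is a Lagrangian cobordism whose lower slice is the larger figure-eight curve 8¹₋(5) at height 1 and whose upper slice is the smaller curve 8¹₋(4) at height 10.) -/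
/-- The image `i_a(8¹₋(r)) ⊆ ℝ⁴`, coordinates (x₁,x₂,y₁,y₂) = indices (0,1,2,3). -/
def fig8neg (r a : ℝ) : Set (Fin 4 → ℝ) :=
  {p | p 0 ^ 2 + p 1 ^ 2 = r ^ 2 ∧ p 2 = -2 * p 0 * p 1 ∧ p 3 = a}

noncomputable def myF : (Fin 2 → ℝ) → ℝ :=
  fun x => -(x 0) ^ 2 * x 1 + 26 * x 1 - (x 1) ^ 3 / 3

lemma myF_hasFDerivAt (x : Fin 2 → ℝ) :
    HasFDerivAt myF
      (((-2 : ℝ) * x 0 * x 1) • (ContinuousLinearMap.proj 0 : (Fin 2 → ℝ) →L[ℝ] ℝ) +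
        (26 - x 0 ^ 2 - x 1 ^ 2) • (ContinuousLinearMap.proj 1 : (Fin 2 → ℝ) →L[ℝ] ℝ)) x := by
  have h0 : HasFDerivAt (fun y : Fin 2 → ℝ => y 0)
      (ContinuousLinearMap.proj 0 : (Fin 2 → ℝ) →L[ℝ] ℝ) x :=
    (ContinuousLinearMap.proj 0 : (Fin 2 → ℝ) →L[ℝ] ℝ).hasFDerivAt
  have h1 : HasFDerivAt (fun y : Fin 2 → ℝ => y 1)
      (ContinuousLinearMap.proj 1 : (Fin 2 → ℝ) →L[ℝ] ℝ) x :=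
    (ContinuousLinearMap.proj 1 : (Fin 2 → ℝ) →L[ℝ] ℝ).hasFDerivAt
  have h := ((((h0.mul h0).neg.mul h1).add (h1.const_mul 26)).sub
    (((h1.mul h1).mul h1).const_mul (1/3)))
  refine HasFDerivAt.congr_of_eventuallyEq (h.congr_fderiv ?_) (Filter.Eventually.of_forall fun y => ?_)
  · ext v
    simp [ContinuousLinearMap.proj_apply]
    ring
  · simp [myF]; ring

lemma myF_d0 (x : Fin 2 → ℝ) : fderiv ℝ myF x (Pi.single 0 1) = -2 * x 0 * x 1 := by
  rw [(myF_hasFDerivAt x).fderiv]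
  simp [ContinuousLinearMap.proj_apply]

lemma myF_d1 (x : Fin 2 → ℝ) : fderiv ℝ myF x (Pi.single 1 1) = 26 - x 0 ^ 2 - x 1 ^ 2 := by
  rw [(myF_hasFDerivAt x).fderiv]
  simp [ContinuousLinearMap.proj_apply]

lemma myF_smooth : ContDiff ℝ (⊤ : ℕ∞) myF := by
  have h0 : ContDiff ℝ (⊤ : ℕ∞) (fun y : Fin 2 → ℝ => y 0) :=
    (ContinuousLinearMap.proj 0 : (Fin 2 → ℝ) →L[ℝ] ℝ).contDiff
  have h1 : ContDiff ℝ (⊤ : ℕ∞) (fun y : Fin 2 → ℝ => y 1) :=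
    (ContinuousLinearMap.proj 1 : (Fin 2 → ℝ) →L[ℝ] ℝ).contDiff
  exact (((h0.pow 2).neg.mul h1).add (contDiff_const.mul h1)).sub ((h1.pow 3).div_const 3)

lemma myF_slice (c r : ℝ) (hc : c = 26 - r ^ 2) :
    Set.range (fun x : Fin 2 → ℝ =>
        (![x 0, x 1, fderiv ℝ myF x (Pi.single 0 1), fderiv ℝ myF x (Pi.single 1 1)] :
          Fin 4 → ℝ))
      ∩ {p | p 3 = c} = fig8neg r c := by
  ext p
  simp only [Set.mem_inter_iff, Set.mem_range, Set.mem_setOf_eq, fig8neg]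
  constructor
  · rintro ⟨⟨x, rfl⟩, hp⟩
    have hp' : 26 - x 0 ^ 2 - x 1 ^ 2 = c := by
      rw [← myF_d1 x]; exact hp
    refine ⟨?_, ?_, ?_⟩
    · show x 0 ^ 2 + x 1 ^ 2 = r ^ 2
      nlinarith [hp', hc]
    · show fderiv ℝ myF x (Pi.single 0 1) = -2 * x 0 * x 1
      exact myF_d0 x
    · show fderiv ℝ myF x (Pi.single 1 1) = c
      rw [myF_d1]; exact hp'
  · rintro ⟨h1, h2, h3⟩
    refine ⟨⟨fun i => p i.castSucc.castSucc, ?_⟩, h3⟩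
    have e0 : (fun i : Fin 2 => p i.castSucc.castSucc) 0 = p 0 := rfl
    have e1 : (fun i : Fin 2 => p i.castSucc.castSucc) 1 = p 1 := rfl
    funext j
    fin_cases j <;>
      simp [e0, e1, myF_d0, myF_d1, h2, h3, hc] <;> linarith [h1]

/-- There is a smooth `F : ℝ² → ℝ` whose graph of `dF` (a Lagrangian in ℝ⁴) has slice
`i₁(8¹₋(5))` at height `y₂ = 1` and slice `i₁₀(8¹₋(4))` at height `y₂ = 10`. -/
theorem stmt4 :
    ∃ F : (Fin 2 → ℝ) → ℝ, ContDiff ℝ (⊤ : ℕ∞) F ∧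
      (Set.range (fun x : Fin 2 → ℝ =>
          (![x 0, x 1, fderiv ℝ F x (Pi.single 0 1), fderiv ℝ F x (Pi.single 1 1)] :
            Fin 4 → ℝ))
        ∩ {p | p 3 = 1} = fig8neg 5 1) ∧
      (Set.range (fun x : Fin 2 → ℝ =>
          (![x 0, x 1, fderiv ℝ F x (Pi.single 0 1), fderiv ℝ F x (Pi.single 1 1)] :
            Fin 4 → ℝ))
        ∩ {p | p 3 = 10} = fig8neg 4 10) := by
  exact ⟨myF, myF_smooth, myF_slice 1 5 (by norm_num), myF_slice 10 4 (by norm_num)⟩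
end

section
/- Let G: ℝᵐ × ℝᵏ → ℝ be a smooth function such that the map i_G: Σ_G → ℝᵐ × ℝᵐ given by i_G(x, w) = (x, D_xG(x, w)) is injective on Σ_G (i.e., the immersed Lagrangian generated by G is embedded). Then every critical point of the difference function δ(x, w, w̃) = G(x, w) − G(x, w̃) has critical value 0; that is, if the total derivative of δ vanishes at (x, w, w̃), then G(x, w) = G(x, w̃). -/
private def stmt7L1 (m k : ℕ) :
    ((Fin m → ℝ) × (Fin k → ℝ) × (Fin k → ℝ)) →L[ℝ] ((Fin m → ℝ) × (Fin k → ℝ)) :=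
  (ContinuousLinearMap.fst ℝ _ _).prod
    ((ContinuousLinearMap.fst ℝ (Fin k → ℝ) (Fin k → ℝ)).comp (ContinuousLinearMap.snd ℝ _ _))

private def stmt7L2 (m k : ℕ) :
    ((Fin m → ℝ) × (Fin k → ℝ) × (Fin k → ℝ)) →L[ℝ] ((Fin m → ℝ) × (Fin k → ℝ)) :=
  (ContinuousLinearMap.fst ℝ _ _).prod
    ((ContinuousLinearMap.snd ℝ (Fin k → ℝ) (Fin k → ℝ)).comp (ContinuousLinearMap.snd ℝ _ _))

/-- If the immersed Lagrangian generated by `G` is embedded (the map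
`(x,w) ↦ (x, D_xG(x,w))` is injective on the fiber critical locus `Σ_G`), then every
critical point of the difference function `δ(x,w,w̃) = G(x,w) - G(x,w̃)` has critical
value `0`. -/
theorem stmt7 (m k : ℕ) (G : (Fin m → ℝ) × (Fin k → ℝ) → ℝ) (hG : ContDiff ℝ (⊤ : ℕ∞) G)
    (hemb : Set.InjOn
      (fun p : (Fin m → ℝ) × (Fin k → ℝ) =>
        (p.1, fun i => fderiv ℝ G p (Pi.single i 1, 0)))
      {p | ∀ η : Fin k → ℝ, fderiv ℝ G p (0, η) = 0})
    (x : Fin m → ℝ) (w wt : Fin k → ℝ)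
    (hcrit : fderiv ℝ
      (fun p : (Fin m → ℝ) × (Fin k → ℝ) × (Fin k → ℝ) =>
        G (p.1, p.2.1) - G (p.1, p.2.2)) (x, w, wt) = 0) :
    G (x, w) = G (x, wt) := by
  have hGd := hG.differentiable (by simp)
  have h1 : HasFDerivAt (fun p : (Fin m → ℝ) × (Fin k → ℝ) × (Fin k → ℝ) => G (p.1, p.2.1))
      ((fderiv ℝ G (x, w)).comp (stmt7L1 m k)) (x, w, wt) :=
    ((hGd (x, w)).hasFDerivAt).comp (x, w, wt) (stmt7L1 m k).hasFDerivAt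
  have h2 : HasFDerivAt (fun p : (Fin m → ℝ) × (Fin k → ℝ) × (Fin k → ℝ) => G (p.1, p.2.2))
      ((fderiv ℝ G (x, wt)).comp (stmt7L2 m k)) (x, w, wt) :=
    ((hGd (x, wt)).hasFDerivAt).comp (x, w, wt) (stmt7L2 m k).hasFDerivAt
  have hδ : fderiv ℝ (fun p : (Fin m → ℝ) × (Fin k → ℝ) × (Fin k → ℝ) =>
      G (p.1, p.2.1) - G (p.1, p.2.2)) (x, w, wt) = _ := (h1.sub h2).fderiv
  rw [hcrit] at hδ
  have key : ∀ v : (Fin m → ℝ) × (Fin k → ℝ) × (Fin k → ℝ),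
      fderiv ℝ G (x, w) (v.1, v.2.1) = fderiv ℝ G (x, wt) (v.1, v.2.2) := by
    intro v
    have h0 := congrFun (congrArg (DFunLike.coe) hδ.symm) v
    simp only [ContinuousLinearMap.sub_apply, ContinuousLinearMap.comp_apply,
      ContinuousLinearMap.zero_apply] at h0
    have e1 : stmt7L1 m k v = (v.1, v.2.1) := rfl
    have e2 : stmt7L2 m k v = (v.1, v.2.2) := rfl
    rw [e1, e2] at h0
    linarith [h0]
  have hA : ∀ η : Fin k → ℝ, fderiv ℝ G (x, w) (0, η) = 0 := by
    intro η; simpa [show ((0 : Fin m → ℝ), (0 : Fin k → ℝ)) = 0 from rfl] using key (0, η, 0)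
  have hB : ∀ η : Fin k → ℝ, fderiv ℝ G (x, wt) (0, η) = 0 := by
    intro η; simpa [show ((0 : Fin m → ℝ), (0 : Fin k → ℝ)) = 0 from rfl] using (key (0, 0, η)).symm
  have hC : ∀ i, fderiv ℝ G (x, w) (Pi.single i 1, 0)
      = fderiv ℝ G (x, wt) (Pi.single i 1, 0) := fun i => key (Pi.single i 1, 0, 0)
  have heq : (x, w) = (x, wt) := hemb hA hB (Prod.ext rfl (funext hC))
  rw [show w = wt from congrArg Prod.snd heq]
end

section
/- Let F: ℝᵐ × ℝᵏ → ℝ be a C² function, let p = (x, e) ∈ Σ_F, and let H = D²F(p) be the Hessian of F at p, written in blocks H_{xx}, H_{xe}, H_{ex}, H_{ee} according to the splitting ℝᵐ × ℝᵏ. Suppose (ξ, η) and (ξ′, η′) ∈ ℝᵐ × ℝᵏ are tangent to Σ_F at p in the sense that H_{ex}ξ + H_{ee}η = 0 and H_{ex}ξ′ + H_{ee}η′ = 0. Then, setting u = (ξ, H_{xx}ξ + H_{xe}η) and v = (ξ′, H_{xx}ξ′ + H_{xe}η′) (the images of these vectors under the derivative of the map i_F(x,e) = (x, D_xF(x,e))),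 one has ω(u, v) = 0, where ω is the standard symplectic form on ℝᵐ × ℝᵐ. That is, the set generated by F is isotropic. -/
/-!
With `v = (ξ, η)`, `v' = (ξ', η')` and `H = D²F(p)`, the two sums are `H v' (ξ, 0)` and
`H v (ξ', 0)`. Tangency says `H v (0, ·) = H v' (0, ·) = 0`, so `(ξ, 0)` may be replaced by `v`
and `(ξ', 0)` by `v'`; the difference becomes `H v' v - H v v'`, which vanishes because the
second derivative of a `C²` function is symmetric.
-/

theorem ContinuousLinearMap.sum_mul_apply_single_zero {R G ι : Type*} [Semiring R]
    [TopologicalSpace R] [AddCommMonoid G] [Module R G] [TopologicalSpace G] [Fintype ι]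
    [DecidableEq ι] (ℓ : (ι → R) × G →L[R] R) (a : ι → R) :
    ∑ i, a i * ℓ (Pi.single i 1, 0) = ℓ (a, 0) := by
  have ha : ((a, 0) : (ι → R) × G) = ∑ i, a i • ((Pi.single i 1 : ι → R), (0 : G)) := by
    ext
    · simp [Prod.fst_sum, Finset.sum_apply, Pi.single_apply]
    · simp [Prod.snd_sum]
  simp only [ha, map_sum, map_smul, smul_eq_mul]

theorem ContinuousLinearMap.apply_fst_zero_comm {𝕜 M N : Type*} [NontriviallyNormedField 𝕜]
    [NormedAddCommGroup M] [NormedSpace 𝕜 M] [NormedAddCommGroup N] [NormedSpace 𝕜 N]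
    (H : M × N →L[𝕜] M × N →L[𝕜] 𝕜) (hH : ∀ v w, H v w = H w v) {v w : M × N}
    (hv : ∀ y, H v (0, y) = 0) (hw : ∀ y, H w (0, y) = 0) :
    H w (v.1, 0) = H v (w.1, 0) := by
  have drop_snd : ∀ u z : M × N, (∀ y, H u (0, y) = 0) → H u (z.1, 0) = H u z :=
    fun u z hu => by rw [← add_zero (H u (z.1, 0)), ← hu z.2, ← map_add, Prod.mk_add_mk,
      add_zero, zero_add]
  rw [drop_snd w v hw, drop_snd v w hv, hH]

theorem stmt14_general (m k : ℕ) (F : (Fin m → ℝ) × (Fin k → ℝ) → ℝ) (hF : ContDiff ℝ 2 F)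
    (p : (Fin m → ℝ) × (Fin k → ℝ))
    (ξ ξ' : Fin m → ℝ) (η η' : Fin k → ℝ)
    (htan : ∀ η₀ : Fin k → ℝ, fderiv ℝ (fderiv ℝ F) p (ξ, η) (0, η₀) = 0)
    (htan' : ∀ η₀ : Fin k → ℝ, fderiv ℝ (fderiv ℝ F) p (ξ', η') (0, η₀) = 0) :
    (∑ i, ξ i * fderiv ℝ (fderiv ℝ F) p (ξ', η') (Pi.single i 1, 0))
      - (∑ i, (fderiv ℝ (fderiv ℝ F) p (ξ, η) (Pi.single i 1, 0)) * ξ' i) = 0 := by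
  have hsymm : IsSymmSndFDerivAt ℝ F p := hF.contDiffAt.isSymmSndFDerivAt (by simp)
  simp only [mul_comm _ (ξ' _), ContinuousLinearMap.sum_mul_apply_single_zero]
  rw [sub_eq_zero]
  exact (fderiv ℝ (fderiv ℝ F) p).apply_fst_zero_comm hsymm htan htan'

/-- The set generated by a C² generating family `F` is isotropic: if `(ξ,η)` and `(ξ',η')`
are tangent to the fiber critical locus `Σ_F` at `p` (i.e. annihilated by the fiber rows of
the Hessian `H = D²F(p)`), then their images `u = (ξ, H_{xx}ξ + H_{xe}η)` and
`v = (ξ', H_{xx}ξ' + H_{xe}η')` under `di_F` satisfy `ω(u,v) = 0`. -/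
theorem stmt14 (m k : ℕ) (F : (Fin m → ℝ) × (Fin k → ℝ) → ℝ) (hF : ContDiff ℝ 2 F)
    (p : (Fin m → ℝ) × (Fin k → ℝ))
    (hp : ∀ η : Fin k → ℝ, fderiv ℝ F p (0, η) = 0)
    (ξ ξ' : Fin m → ℝ) (η η' : Fin k → ℝ)
    (htan : ∀ η₀ : Fin k → ℝ, fderiv ℝ (fderiv ℝ F) p (ξ, η) (0, η₀) = 0)
    (htan' : ∀ η₀ : Fin k → ℝ, fderiv ℝ (fderiv ℝ F) p (ξ', η') (0, η₀) = 0) :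
    (∑ i, ξ i * fderiv ℝ (fderiv ℝ F) p (ξ', η') (Pi.single i 1, 0))
      - (∑ i, (fderiv ℝ (fderiv ℝ F) p (ξ, η) (Pi.single i 1, 0)) * ξ' i) = 0 :=
  stmt14_general m k F hF p ξ ξ' η η' htan htan'
end
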